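/- Multi-term generalized Leibniz identity: let 0 < α_m ≤ ⋯ ≤ α_1 ≤ α < 1, b_i > 0, and define P(∂_t)φ = ∂_t^α φ + Σ b_i ∂_t^{α_i} φ (Caputo derivatives) and Q(I)φ = α I^{1−α} φ + Σ α_i b_i I^{1−α_i} φ. Then for φ ∈ C^1([0,T]) with φ(0) = 0, P(∂_t)(t φ(t)) = t P(∂_t) φ(t) + Q(I) φ(t). -/

import Mathlib

noncomputable def w (γ t : ℝ) : ℝ := t ^ (γ - 1) / Real.Gamma γ

/-- Caputo fractional derivative of order `β` (given the derivative `φ'`). -/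
noncomputable def caputo (β : ℝ) (φ' : ℝ → ℝ) (t : ℝ) : ℝ :=
  ∫ s in (0:ℝ)..t, w (1 - β) (t - s) * φ' s

/-!
Writing `s = t - (t - s)` splits `∂^β (s φ)` as `t ∂^β φ` plus a term with kernel
`(t - s) ω_{1-β}(t - s) = (1 - β) ω_{2-β}(t - s)`, and integrating that term by parts turns
`I^{2-β} φ'` into `I^{1-β} φ` (this is where `φ 0 = 0` enters). Each Caputo term of the
multi-term operator is treated separately.
-/

open Set MeasureTheory intervalIntegral
open scoped Interval

/-- The Riemann–Liouville integral `I^ν f (t)`, so that `caputo β φ' = rlIntegral (1 - β) φ'`. -/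
noncomputable def rlIntegral (ν : ℝ) (f : ℝ → ℝ) (t : ℝ) : ℝ :=
  ∫ s in (0:ℝ)..t, w ν (t - s) * f s

lemma w_eq_rpow_div (γ x : ℝ) : w γ x = x ^ (γ - 1) / Real.Gamma γ := rfl

lemma intervalIntegrable_w_sub_mul {γ t : ℝ} {f : ℝ → ℝ} (hγ : 0 < γ)
    (hf : ContinuousOn f [[0, t]]) :
    IntervalIntegrable (fun s => w γ (t - s) * f s) volume 0 t := by
  have hrpow : IntervalIntegrable (fun s => (t - s) ^ (γ - 1)) volume 0 t := by
    simpa using ((intervalIntegrable_rpow' (a := 0) (b := t) (by linarith)).comp_sub_left t).symm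
  exact (hrpow.div_const _).mul_continuousOn hf

lemma mul_w {γ x : ℝ} (hγ : γ ≠ 0) (hx : 0 ≤ x) : x * w γ x = γ * w (γ + 1) x := by
  have hpow : x ^ γ = x * x ^ (γ - 1) := by
    simpa using Real.rpow_add' hx (show 1 + (γ - 1) ≠ 0 by simpa using hγ)
  rw [w_eq_rpow_div, w_eq_rpow_div, add_sub_cancel_right, Real.Gamma_add_one hγ, hpow]
  field_simp

lemma w_add_one_eq (γ : ℝ) : w (γ + 1) = fun x => x ^ γ / Real.Gamma (γ + 1) := by
  funext x
  rw [w_eq_rpow_div, add_sub_cancel_right]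

lemma continuous_w_add_one {γ : ℝ} (hγ : 0 ≤ γ) : Continuous (w (γ + 1)) := by
  rw [w_add_one_eq]
  exact (Real.continuous_rpow_const hγ).div_const _

lemma hasDerivAt_w_add_one {γ x : ℝ} (hγ : γ ≠ 0) (hx : 0 < x) :
    HasDerivAt (w (γ + 1)) (w γ x) x := by
  rw [w_add_one_eq]
  refine ((Real.hasDerivAt_rpow_const (Or.inl hx.ne')).div_const _).congr_deriv ?_
  rw [w_eq_rpow_div, Real.Gamma_add_one hγ, mul_div_mul_left _ _ hγ]

-- Integration by parts; the boundary terms vanish because `w (γ + 1) 0 = 0` and `φ 0 = 0`.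
lemma rlIntegral_add_one_deriv {γ t : ℝ} {φ φ' : ℝ → ℝ} (hγ : 0 < γ) (ht : 0 ≤ t)
    (hderiv : ∀ s, HasDerivAt φ (φ' s) s) (hcont : Continuous φ') (hφ0 : φ 0 = 0) :
    rlIntegral (γ + 1) φ' t = rlIntegral γ φ t := by
  have hφ : Continuous φ := continuous_iff_continuousAt.mpr fun s => (hderiv s).continuousAt
  have hu : ∀ s ∈ Ioo (min 0 t) (max 0 t),
      HasDerivAt (fun s => w (γ + 1) (t - s)) (-w γ (t - s)) s := by
    intro s hs
    rw [min_eq_left ht, max_eq_right ht] at hs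
    simpa using (hasDerivAt_w_add_one hγ.ne' (sub_pos.mpr hs.2)).comp_const_sub t s
  have hibp := integral_mul_deriv_eq_deriv_mul_of_hasDerivAt (u := fun s => w (γ + 1) (t - s))
    ((continuous_w_add_one hγ.le).comp (continuous_sub_left t)).continuousOn hφ.continuousOn
    hu (fun s _ => hderiv s)
    (by simpa using (intervalIntegrable_w_sub_mul (f := fun _ => (-1 : ℝ)) hγ continuousOn_const))
    (hcont.intervalIntegrable 0 t)
  simp only [hφ0, mul_zero, sub_zero, neg_mul, intervalIntegral.integral_neg] at hibp
  rw [rlIntegral, rlIntegral, hibp, sub_self, w_add_one_eq]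
  simp [Real.zero_rpow hγ.ne']

lemma rlIntegral_leibniz {γ t : ℝ} {φ φ' : ℝ → ℝ} (hγ : 0 < γ) (ht : 0 ≤ t)
    (hderiv : ∀ s, HasDerivAt φ (φ' s) s) (hcont : Continuous φ') (hφ0 : φ 0 = 0) :
    rlIntegral γ (fun s => φ s + s * φ' s) t
      = t * rlIntegral γ φ' t + (1 - γ) * rlIntegral γ φ t := by
  have hφ : Continuous φ := continuous_iff_continuousAt.mpr fun s => (hderiv s).continuousAt
  have hpointwise : EqOn (fun s => w γ (t - s) * (φ s + s * φ' s))
      (fun s => w γ (t - s) * φ s + t * (w γ (t - s) * φ' s)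
        - γ * (w (γ + 1) (t - s) * φ' s)) [[0, t]] := by
    intro s hs
    rw [uIcc_of_le ht] at hs
    have := mul_w hγ.ne' (sub_nonneg.mpr hs.2)
    linear_combination (-φ' s) * this
  have hIφ := intervalIntegrable_w_sub_mul hγ hφ.continuousOn (t := t)
  have hIφ' := intervalIntegrable_w_sub_mul hγ hcont.continuousOn (t := t)
  have hIφ'' := intervalIntegrable_w_sub_mul (by linarith) hcont.continuousOn (t := t) (γ := γ + 1)
  rw [rlIntegral, integral_congr hpointwise, integral_sub (hIφ.add (hIφ'.const_mul t))
    (hIφ''.const_mul γ), integral_add hIφ (hIφ'.const_mul t), intervalIntegral.integral_const_mul,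
    intervalIntegral.integral_const_mul]
  rw [← rlIntegral, ← rlIntegral, ← rlIntegral, rlIntegral_add_one_deriv hγ ht hderiv hcont hφ0]
  ring

lemma caputo_leibniz {β t : ℝ} {φ φ' : ℝ → ℝ} (hβ : β < 1) (ht : 0 ≤ t)
    (hderiv : ∀ s, HasDerivAt φ (φ' s) s) (hcont : Continuous φ') (hφ0 : φ 0 = 0) :
    caputo β (fun s => φ s + s * φ' s) t = t * caputo β φ' t + β * rlIntegral (1 - β) φ t := by
  have h := rlIntegral_leibniz (γ := 1 - β) (by linarith) ht hderiv hcont hφ0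
  rwa [sub_sub_cancel] at h

theorem multiterm_Leibniz_general (T α : ℝ) (h1 : α < 1)
    (m : ℕ) (a b : Fin m → ℝ)
    (haα : ∀ i, a i ≤ α)
    (φ φ' : ℝ → ℝ) (hderiv : ∀ s, HasDerivAt φ (φ' s) s) (hcont : Continuous φ')
    (hφ0 : φ 0 = 0) (t : ℝ) (ht : t ∈ Set.Ioc (0:ℝ) T) :
    (caputo α (fun s => φ s + s * φ' s) t
        + ∑ i, b i * caputo (a i) (fun s => φ s + s * φ' s) t)
      = t * (caputo α φ' t + ∑ i, b i * caputo (a i) φ' t)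
        + (α * (∫ s in (0:ℝ)..t, w (1 - α) (t - s) * φ s)
            + ∑ i, a i * b i * (∫ s in (0:ℝ)..t, w (1 - a i) (t - s) * φ s)) := by
  have leibniz := fun β (hβ : β < 1) => caputo_leibniz hβ ht.1.le hderiv hcont hφ0
  have hterm : ∀ i, b i * caputo (a i) (fun s => φ s + s * φ' s) t
      = t * (b i * caputo (a i) φ' t)
        + a i * b i * ∫ s in (0:ℝ)..t, w (1 - a i) (t - s) * φ s := fun i => by
    rw [leibniz (a i) ((haα i).trans_lt h1), rlIntegral]
    ring
  rw [leibniz α h1, Finset.sum_congr rfl fun i _ => hterm i, Finset.sum_add_distrib,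
    ← Finset.mul_sum, rlIntegral]
  ring

theorem multiterm_Leibniz (T α : ℝ) (hT : 0 < T) (h0 : 0 < α) (h1 : α < 1)
    (m : ℕ) (a b : Fin m → ℝ)
    (ha0 : ∀ i, 0 < a i) (haα : ∀ i, a i ≤ α) (hmono : Antitone a)
    (hb : ∀ i, 0 < b i)
    (φ φ' : ℝ → ℝ) (hderiv : ∀ s, HasDerivAt φ (φ' s) s) (hcont : Continuous φ')
    (hφ0 : φ 0 = 0) (t : ℝ) (ht : t ∈ Set.Ioc (0:ℝ) T) :
    (caputo α (fun s => φ s + s * φ' s) t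
        + ∑ i, b i * caputo (a i) (fun s => φ s + s * φ' s) t)
      = t * (caputo α φ' t + ∑ i, b i * caputo (a i) φ' t)
        + (α * (∫ s in (0:ℝ)..t, w (1 - α) (t - s) * φ s)
            + ∑ i, a i * b i * (∫ s in (0:ℝ)..t, w (1 - a i) (t - s) * φ s)) :=
  multiterm_Leibniz_general T α h1 m a b haα φ φ' hderiv hcont hφ0 t ht
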